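/- arXiv:0905.1789 — 2 statements merged into one kernel-verified Lean document; each statement's English description precedes it below -/
import Mathlib

section
/- Let L = FreeLieAlgebra ℝ (Fin n) with generators x₁,…,x_n. Suppose D and E are Lie algebra derivations of L such that there exist elements a₁,…,a_n, b₁,…,b_n ∈ L with D(x_k) = ⁅a_k, x_k⁆ and E(x_k) = ⁅b_k, x_k⁆ for all k, and D(x₁ + ⋯ + x_n) = E(x₁ + ⋯ + x_n) = 0. Then the commutator derivation ⁅D, E⁆ = D∘E − E∘D satisfies ⁅D,E⁆(x_k) = ⁅c_k, x_k⁆ with c_k = D(b_k) − E(a_k) − ⁅a_k, b_k⁆, and ⁅D,E⁆(x₁ + ⋯ + x_n) = 0. Consequently the set of such 'special' derivations is a Lie subalgebra of the Lie algebra of derivations of L. -/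
/-!
If `D x = ⁅a, x⁆` and `E x = ⁅b, x⁆`, expanding `D (E x) - E (D x)` with the Leibniz rule and
the Jacobi identity gives `⁅D, E⁆ x = ⁅D b - E a - ⁅a, b⁆, x⁆`, so acting on each generator by an
inner derivation is preserved by commutators; killing `x₁ + ⋯ + xₙ` obviously is too.
-/

namespace LieDerivation

variable {R L : Type*} [CommRing R] [LieRing L] [LieAlgebra R L]

theorem lie_apply_eq_lie_of_apply_eq_lie (D E : LieDerivation R L L) {x a b : L}
    (hD : D x = ⁅a, x⁆) (hE : E x = ⁅b, x⁆) :
    ⁅D, E⁆ x = ⁅D b - E a - ⁅a, b⁆, x⁆ := by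
  rw [commutator_apply, hD, hE, apply_lie_eq_add, apply_lie_eq_add, hD, hE]
  simp only [sub_lie, lie_lie]
  abel

theorem lie_apply_eq_zero (D E : LieDerivation R L L) {x : L} (hD : D x = 0) (hE : E x = 0) :
    ⁅D, E⁆ x = 0 := by
  rw [commutator_apply, hD, hE, map_zero, map_zero, sub_zero]

variable (R) in
def tangential {ι : Type*} (x : ι → L) : LieSubalgebra R (LieDerivation R L L) where
  carrier := {D | ∃ c : ι → L, ∀ k, D (x k) = ⁅c k, x k⁆}
  zero_mem' := ⟨0, fun k => by simp⟩
  add_mem' := by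
    rintro D E ⟨c, hc⟩ ⟨d, hd⟩
    exact ⟨c + d, fun k => by rw [add_apply, hc, hd, Pi.add_apply, add_lie]⟩
  smul_mem' := by
    rintro r D ⟨c, hc⟩
    exact ⟨r • c, fun k => by rw [smul_apply, hc, Pi.smul_apply, smul_lie]⟩
  lie_mem' := by
    rintro D E ⟨c, hc⟩ ⟨d, hd⟩
    exact ⟨fun k => D (d k) - E (c k) - ⁅c k, d k⁆,
      fun k => lie_apply_eq_lie_of_apply_eq_lie D E (hc k) (hd k)⟩

theorem mem_tangential {ι : Type*} {x : ι → L} {D : LieDerivation R L L} :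
    D ∈ tangential R x ↔ ∃ c : ι → L, ∀ k, D (x k) = ⁅c k, x k⁆ :=
  Iff.rfl

variable (R) in
def annihilator (x : L) : LieSubalgebra R (LieDerivation R L L) where
  carrier := {D | D x = 0}
  zero_mem' := zero_apply x
  add_mem' {D E} hD hE := show (D + E) x = 0 by rw [add_apply, hD, hE, add_zero]
  smul_mem' r D hD := show (r • D) x = 0 by rw [smul_apply, hD, smul_zero]
  lie_mem' {D E} hD hE := lie_apply_eq_zero D E hD hE

theorem mem_annihilator {x : L} {D : LieDerivation R L L} : D ∈ annihilator R x ↔ D x = 0 :=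
  Iff.rfl

variable (R) in
/-- For the generators of the free Lie algebra on `Fin n` this is the Lie algebra `sder_n`. -/
def special {ι : Type*} [Fintype ι] (x : ι → L) : LieSubalgebra R (LieDerivation R L L) :=
  tangential R x ⊓ annihilator R (∑ k, x k)

theorem mem_special {ι : Type*} [Fintype ι] {x : ι → L} {D : LieDerivation R L L} :
    D ∈ special R x ↔ (∃ c : ι → L, ∀ k, D (x k) = ⁅c k, x k⁆) ∧ D (∑ k, x k) = 0 :=
  LieSubalgebra.mem_inf _ _ _

end LieDerivation

open LieDerivation in
/-- The commutator of two special derivations of the free Lie algebra is again a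
special derivation, with the explicit tangential element
`c_k = D(b_k) − E(a_k) − ⁅a_k, b_k⁆`; consequently the special derivations form a
Lie subalgebra of the Lie algebra of derivations. -/
theorem stmt_3 (n : ℕ)
    (D E : LieDerivation ℝ (FreeLieAlgebra ℝ (Fin n)) (FreeLieAlgebra ℝ (Fin n)))
    (a b : Fin n → FreeLieAlgebra ℝ (Fin n))
    (hD : ∀ k : Fin n, D (FreeLieAlgebra.of ℝ k) = ⁅a k, FreeLieAlgebra.of ℝ k⁆)
    (hE : ∀ k : Fin n, E (FreeLieAlgebra.of ℝ k) = ⁅b k, FreeLieAlgebra.of ℝ k⁆)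
    (hD0 : D (∑ k : Fin n, FreeLieAlgebra.of ℝ k) = 0)
    (hE0 : E (∑ k : Fin n, FreeLieAlgebra.of ℝ k) = 0) :
    (∀ k : Fin n,
        ⁅D, E⁆ (FreeLieAlgebra.of ℝ k)
          = ⁅D (b k) - E (a k) - ⁅a k, b k⁆, FreeLieAlgebra.of ℝ k⁆) ∧
    ⁅D, E⁆ (∑ k : Fin n, FreeLieAlgebra.of ℝ k) = 0 ∧
    ∃ S : LieSubalgebra ℝ
        (LieDerivation ℝ (FreeLieAlgebra ℝ (Fin n)) (FreeLieAlgebra ℝ (Fin n))),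
      ∀ F : LieDerivation ℝ (FreeLieAlgebra ℝ (Fin n)) (FreeLieAlgebra ℝ (Fin n)),
        F ∈ S ↔
          (∃ c : Fin n → FreeLieAlgebra ℝ (Fin n),
              ∀ k : Fin n, F (FreeLieAlgebra.of ℝ k) = ⁅c k, FreeLieAlgebra.of ℝ k⁆) ∧
            F (∑ k : Fin n, FreeLieAlgebra.of ℝ k) = 0 :=
  ⟨fun k => lie_apply_eq_lie_of_apply_eq_lie D E (hD k) (hE k), lie_apply_eq_zero D E hD0 hE0,
    special ℝ (FreeLieAlgebra.of ℝ), fun _ => mem_special⟩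
end

section
/- Let L = FreeLieAlgebra ℝ (Fin n) with generators x₁,…,x_n. For distinct indices a, b let D_{ab} be the unique derivation of L with D_{ab}(x_a) = ⁅x_b, x_a⁆, D_{ab}(x_b) = ⁅x_a, x_b⁆, and D_{ab}(x_c) = 0 for c ∉ {a,b}. Then: (i) D_{ab} = D_{ba}; (ii) D_{ab}(x₁ + ⋯ + x_n) = 0, so each D_{ab} is a special derivation; (iii) ⁅D_{ab}, D_{cd}⁆ = 0 whenever a, b, c, d are pairwise distinct; and (iv) ⁅D_{ab}, D_{ac} + D_{bc}⁆ = 0 whenever a, b, c are pairwise distinct. That is, the tangential derivations D_{ab} satisfy the infinitesimal braid relations defining the Drinfeld–Kohno Lie algebra t_n. -/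
/-!
A derivation of a free Lie algebra is determined by its values on the generators, so each
identity reduces to a computation on a single generator `x_k`. For disjoint pairs both composites
vanish on `x_k`, because `D_cd` kills the bracket of `x_a` and `x_b`. For the braid relation, on
`x_a` (and symmetrically on `x_b`) the two sides differ by the Jacobi identity for
`x_c, x_b, x_a`, while on `x_c` both sides vanish because `D_ab (x_a + x_b) = 0`.
-/

open LieSubalgebra

namespace FreeLieAlgebra

variable {R X : Type*} [CommRing R]

theorem lieSpan_range_of : lieSpan R (FreeLieAlgebra R X) (Set.range (of R)) = ⊤ := by
  set S := lieSpan R (FreeLieAlgebra R X) (Set.range (of R))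
  let g : FreeLieAlgebra R X →ₗ⁅R⁆ S := lift R fun i => ⟨of R i, subset_lieSpan ⟨i, rfl⟩⟩
  have hg : S.incl.comp g = LieHom.id := hom_ext fun i => by simp [g]
  refine eq_top_iff.2 fun x _ => ?_
  have hx : S.incl (g x) = x := DFunLike.congr_fun hg x
  exact hx ▸ (g x).2

theorem lieDerivation_ext {D₁ D₂ : LieDerivation R (FreeLieAlgebra R X) (FreeLieAlgebra R X)}
    (h : ∀ i, D₁ (of R i) = D₂ (of R i)) : D₁ = D₂ :=
  LieDerivation.ext_of_lieSpan_eq_top _ lieSpan_range_of <| by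
    rintro _ ⟨i, rfl⟩
    exact h i

theorem lieDerivation_lie_eq_zero
    {D₁ D₂ : LieDerivation R (FreeLieAlgebra R X) (FreeLieAlgebra R X)}
    (h : ∀ i, D₁ (D₂ (of R i)) = D₂ (D₁ (of R i))) : ⁅D₁, D₂⁆ = 0 :=
  lieDerivation_ext fun i => by
    rw [LieDerivation.commutator_apply, h, sub_self, LieDerivation.zero_apply]

structure IsTangentialDerivation (D : LieDerivation R (FreeLieAlgebra R X) (FreeLieAlgebra R X))
    (a b : X) : Prop where
  apply_left : D (of R a) = ⁅of R b, of R a⁆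
  apply_right : D (of R b) = ⁅of R a, of R b⁆
  apply_of_ne : ∀ c, c ≠ a → c ≠ b → D (of R c) = 0

namespace IsTangentialDerivation

variable {D D' D₁ D₂ D₃ : LieDerivation R (FreeLieAlgebra R X) (FreeLieAlgebra R X)} {a b c d : X}

theorem symm (h : IsTangentialDerivation D a b) : IsTangentialDerivation D b a :=
  ⟨h.apply_right, h.apply_left, fun c hb ha => h.apply_of_ne c ha hb⟩

theorem eq (h : IsTangentialDerivation D a b) (h' : IsTangentialDerivation D' a b) : D = D' := by
  refine lieDerivation_ext fun k => ?_
  obtain rfl | hka := eq_or_ne k a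
  · rw [h.apply_left, h'.apply_left]
  obtain rfl | hkb := eq_or_ne k b
  · rw [h.apply_right, h'.apply_right]
  rw [h.apply_of_ne k hka hkb, h'.apply_of_ne k hka hkb]

theorem apply_of_add_of (h : IsTangentialDerivation D a b) : D (of R a + of R b) = 0 := by
  rw [map_add, h.apply_left, h.apply_right, ← lie_skew, neg_add_cancel]

theorem apply_sum_of [Fintype X] (h : IsTangentialDerivation D a b) (hab : a ≠ b) :
    D (∑ k, of R k) = 0 := by
  rw [map_sum, Finset.sum_eq_add_of_mem a b (Finset.mem_univ a) (Finset.mem_univ b) hab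
    fun k _ hk => h.apply_of_ne k hk.1 hk.2, ← map_add, h.apply_of_add_of]

theorem apply_apply_of_eq_zero (h₁ : IsTangentialDerivation D₁ a b)
    (h₂ : IsTangentialDerivation D₂ c d) (hac : a ≠ c) (had : a ≠ d) (hbc : b ≠ c) (hbd : b ≠ d)
    (k : X) : D₂ (D₁ (of R k)) = 0 := by
  have h₂a := h₂.apply_of_ne a hac had
  have h₂b := h₂.apply_of_ne b hbc hbd
  obtain rfl | hka := eq_or_ne k a
  · rw [h₁.apply_left, LieDerivation.apply_lie_eq_add, h₂a, h₂b, lie_zero, zero_lie, add_zero]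
  obtain rfl | hkb := eq_or_ne k b
  · rw [h₁.apply_right, LieDerivation.apply_lie_eq_add, h₂a, h₂b, lie_zero, zero_lie, add_zero]
  rw [h₁.apply_of_ne k hka hkb, map_zero]

theorem lie_eq_zero (h₁ : IsTangentialDerivation D₁ a b) (h₂ : IsTangentialDerivation D₂ c d)
    (hac : a ≠ c) (had : a ≠ d) (hbc : b ≠ c) (hbd : b ≠ d) : ⁅D₁, D₂⁆ = 0 :=
  lieDerivation_lie_eq_zero fun k => by
    rw [h₁.apply_apply_of_eq_zero h₂ hac had hbc hbd,
      h₂.apply_apply_of_eq_zero h₁ hac.symm hbc.symm had.symm hbd.symm]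

theorem braid_apply_left (h₁ : IsTangentialDerivation D₁ a b)
    (h₂ : IsTangentialDerivation D₂ a c) (h₃ : IsTangentialDerivation D₃ b c)
    (hab : a ≠ b) (hac : a ≠ c) (hbc : b ≠ c) :
    D₁ ((D₂ + D₃) (of R a)) = (D₂ + D₃) (D₁ (of R a)) := by
  simp only [LieDerivation.add_apply, h₁.apply_left, LieDerivation.apply_lie_eq_add, h₂.apply_left,
    h₂.apply_of_ne b hab.symm hbc, h₃.apply_left, h₃.apply_of_ne a hab hac,
    h₁.apply_of_ne c hac.symm hbc.symm, add_zero, zero_add, zero_lie]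
  rw [leibniz_lie, add_comm]

theorem braid_apply_right (h₁ : IsTangentialDerivation D₁ a b)
    (h₂ : IsTangentialDerivation D₂ a c) (h₃ : IsTangentialDerivation D₃ b c)
    (hac : a ≠ c) (hbc : b ≠ c) :
    D₁ ((D₂ + D₃) (of R c)) = (D₂ + D₃) (D₁ (of R c)) := by
  have h₁c := h₁.apply_of_ne c hac.symm hbc.symm
  rw [LieDerivation.add_apply, h₂.apply_right, h₃.apply_right, ← add_lie,
    LieDerivation.apply_lie_eq_add, h₁.apply_of_add_of, h₁c, zero_lie, lie_zero, add_zero, map_zero]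

theorem lie_add_eq_zero (h₁ : IsTangentialDerivation D₁ a b)
    (h₂ : IsTangentialDerivation D₂ a c) (h₃ : IsTangentialDerivation D₃ b c)
    (hab : a ≠ b) (hac : a ≠ c) (hbc : b ≠ c) : ⁅D₁, D₂ + D₃⁆ = 0 :=
  lieDerivation_lie_eq_zero fun k => by
    obtain rfl | hka := eq_or_ne k a
    · exact h₁.braid_apply_left h₂ h₃ hab hac hbc
    obtain rfl | hkb := eq_or_ne k b
    · rw [add_comm D₂]
      exact h₁.symm.braid_apply_left h₃ h₂ hab.symm hbc hac
    obtain rfl | hkc := eq_or_ne k c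
    · exact h₁.braid_apply_right h₂ h₃ hac hbc
    rw [LieDerivation.add_apply, h₁.apply_of_ne k hka hkb, h₂.apply_of_ne k hka hkc,
      h₃.apply_of_ne k hkb hkc, add_zero, map_zero, map_zero]

end IsTangentialDerivation

end FreeLieAlgebra

open FreeLieAlgebra

/-- The tangential derivations `D_ab` of the free Lie algebra (determined by
`D_ab x_a = ⁅x_b, x_a⁆`, `D_ab x_b = ⁅x_a, x_b⁆`, `D_ab x_c = 0` otherwise) are
special derivations satisfying the infinitesimal braid relations of the
Drinfeld–Kohno Lie algebra `t_n`. -/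
theorem stmt_4 (n : ℕ)
    (D : Fin n → Fin n → LieDerivation ℝ (FreeLieAlgebra ℝ (Fin n)) (FreeLieAlgebra ℝ (Fin n)))
    (hDa : ∀ a b : Fin n, a ≠ b →
      D a b (FreeLieAlgebra.of ℝ a) = ⁅FreeLieAlgebra.of ℝ b, FreeLieAlgebra.of ℝ a⁆)
    (hDb : ∀ a b : Fin n, a ≠ b →
      D a b (FreeLieAlgebra.of ℝ b) = ⁅FreeLieAlgebra.of ℝ a, FreeLieAlgebra.of ℝ b⁆)
    (hDc : ∀ a b c : Fin n, a ≠ b → c ≠ a → c ≠ b → D a b (FreeLieAlgebra.of ℝ c) = 0) :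
    (∀ a b : Fin n, a ≠ b → D a b = D b a) ∧
    (∀ a b : Fin n, a ≠ b → D a b (∑ k : Fin n, FreeLieAlgebra.of ℝ k) = 0) ∧
    (∀ a b c d : Fin n, a ≠ b → a ≠ c → a ≠ d → b ≠ c → b ≠ d → c ≠ d →
      ⁅D a b, D c d⁆ = 0) ∧
    (∀ a b c : Fin n, a ≠ b → a ≠ c → b ≠ c →
      ⁅D a b, D a c + D b c⁆ = 0) := by
  have hD (a b : Fin n) (hab : a ≠ b) : IsTangentialDerivation (D a b) a b :=
    ⟨hDa a b hab, hDb a b hab, fun c hca hcb => hDc a b c hab hca hcb⟩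
  refine ⟨fun a b hab => (hD a b hab).eq (hD b a hab.symm).symm,
    fun a b hab => (hD a b hab).apply_sum_of hab, ?_, ?_⟩
  · intro a b c d hab hac had hbc hbd hcd
    exact (hD a b hab).lie_eq_zero (hD c d hcd) hac had hbc hbd
  · intro a b c hab hac hbc
    exact (hD a b hab).lie_add_eq_zero (hD a c hac) (hD b c hbc) hab hac hbc
end
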